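/- Gauss's summation theorem: if c - a - b > 0 and c is not a nonpositive integer, then ₂F₁(a,b;c;1) = Γ(c)Γ(c-a-b)/(Γ(c-a)Γ(c-b)). -/

import Mathlib

open Real

/-- Pochhammer symbol (rising factorial) for real argument. -/
noncomputable def poch (a : ℝ) (n : ℕ) : ℝ := ∏ i ∈ Finset.range n, (a + i)

/-- The Gauss hypergeometric function ₂F₁ as a series. -/
noncomputable def twoF1 (a b c z : ℝ) : ℝ :=
  ∑' n : ℕ, poch a n * poch b n / poch c n * z ^ n / n.factorial

/-!
Gauss's argument. Put `F(c) = ₂F₁(a, b; c; 1)`. A termwise identity telescopes to the contiguous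
relation `c (c - a - b) F(c) = (c - a) (c - b) F(c + 1)`, and iterating it gives
`F(c) = (c - a)ₘ (c - b)ₘ / ((c)ₘ (c - a - b)ₘ) · F(c + m)`. As `m → ∞` the series `F(c + m)`
tends to its constant term `1`, while Euler's limit `Γ(x) = lim nˣ n! / (x)ₙ₊₁` turns the
Pochhammer quotient into `Γ(c) Γ(c - a - b) / (Γ(c - a) Γ(c - b))`. The same limit shows that the
`n`-th term is `O(n^(a + b - c - 1))`, so the series converges when `c - a - b > 0`.
-/

open Filter Topology Asymptotics

lemma poch_zero (x : ℝ) : poch x 0 = 1 :=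
  Finset.prod_range_zero _

lemma poch_succ (x : ℝ) (n : ℕ) : poch x (n + 1) = poch x n * (x + n) :=
  Finset.prod_range_succ _ _

lemma poch_succ' (x : ℝ) (n : ℕ) : poch x (n + 1) = x * poch (x + 1) n := by
  rw [poch, Finset.prod_range_succ', mul_comm, poch]
  push_cast
  simp only [add_zero, add_assoc, add_comm (1 : ℝ)]

lemma poch_one (n : ℕ) : poch 1 n = n.factorial := by
  rw [poch, ← Finset.prod_range_add_one_eq_factorial]
  push_cast
  simp only [add_comm (1 : ℝ)]

lemma poch_pos {x : ℝ} (hx : 0 < x) (n : ℕ) : 0 < poch x n :=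
  Finset.prod_pos fun _ _ => by positivity

lemma poch_nonneg {x : ℝ} (hx : 0 ≤ x) (n : ℕ) : 0 ≤ poch x n :=
  Finset.prod_nonneg fun _ _ => by positivity

lemma poch_ne_zero {x : ℝ} (hx : ∀ m : ℕ, x ≠ -m) (n : ℕ) : poch x n ≠ 0 :=
  Finset.prod_ne_zero_iff.2 fun i _ hi => hx i (eq_neg_of_add_eq_zero_left hi)

lemma poch_eq_zero {m n : ℕ} (hmn : m < n) : poch (-m) n = 0 :=
  Finset.prod_eq_zero (Finset.mem_range.2 hmn) (neg_add_cancel _)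

lemma abs_poch_le (x : ℝ) (n : ℕ) : |poch x n| ≤ poch |x| n := by
  rw [poch, Finset.abs_prod]
  exact Finset.prod_le_prod (fun _ _ => abs_nonneg _) fun i _ =>
    (abs_add_le _ _).trans_eq (by rw [Nat.abs_cast])

lemma poch_le_poch {x y : ℝ} (hx : 0 ≤ x) (hxy : x ≤ y) (n : ℕ) : poch x n ≤ poch y n :=
  Finset.prod_le_prod (fun _ _ => by positivity) fun _ _ => by linarith

lemma GammaSeq_eq_div_poch (x : ℝ) (n : ℕ) :
    GammaSeq x n = n ^ x * n.factorial / poch x (n + 1) := rfl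

-- Also true when `poch x (n + 1) = 0`, since then `GammaSeq x n = 0` as well.
lemma poch_succ_eq_div_GammaSeq (x : ℝ) {n : ℕ} (hn : n ≠ 0) :
    poch x (n + 1) = n ^ x * n.factorial / GammaSeq x n := by
  have : (n : ℝ) ^ x * n.factorial ≠ 0 := by positivity
  rw [GammaSeq_eq_div_poch, div_div_cancel₀ this]

-- `1 / Γ` is entire: at a pole of `Γ` both sides vanish under the convention `0⁻¹ = 0`.
lemma tendsto_GammaSeq_inv (x : ℝ) :
    Tendsto (fun n => (GammaSeq x n)⁻¹) atTop (𝓝 (Gamma x)⁻¹) := by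
  by_cases hx : Gamma x = 0
  · obtain ⟨m, rfl⟩ := (Gamma_eq_zero_iff x).1 hx
    rw [hx, inv_zero]
    refine tendsto_const_nhds.congr' ?_
    filter_upwards [eventually_ge_atTop m] with n hn
    rw [GammaSeq_eq_div_poch, poch_eq_zero (Nat.lt_succ_of_le hn), div_zero, inv_zero]
  · exact (GammaSeq_tendsto_Gamma x).inv₀ hx

lemma poch_mul_poch_div_eq_GammaSeq (x y z w : ℝ) {n : ℕ} (hn : n ≠ 0) :
    poch x (n + 1) * poch y (n + 1) / (poch z (n + 1) * poch w (n + 1)) =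
      (n : ℝ) ^ (x + y - z - w) *
        (GammaSeq z n * GammaSeq w n * (GammaSeq x n)⁻¹ * (GammaSeq y n)⁻¹) := by
  have hn' : (0 : ℝ) < n := by positivity
  have hf : (n.factorial : ℝ) ≠ 0 := by positivity
  simp only [poch_succ_eq_div_GammaSeq _ hn, rpow_sub hn', rpow_add hn']
  field_simp

lemma tendsto_poch_mul_poch_div {x y z w : ℝ} (h : x + y = z + w) :
    Tendsto (fun n => poch x n * poch y n / (poch z n * poch w n)) atTop
      (𝓝 (Gamma z * Gamma w / (Gamma x * Gamma y))) := by
  rw [← tendsto_add_atTop_iff_nat 1, div_eq_mul_inv, mul_inv]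
  refine (((GammaSeq_tendsto_Gamma z).mul (GammaSeq_tendsto_Gamma w)).mul
    ((tendsto_GammaSeq_inv x).mul (tendsto_GammaSeq_inv y))).congr' ?_
  filter_upwards [eventually_ne_atTop 0] with n hn
  rw [poch_mul_poch_div_eq_GammaSeq x y z w hn, h, sub_sub, sub_self, rpow_zero]
  ring

-- `n!` is written as `(1)ₙ`, so that all four factors are Pochhammer symbols.
noncomputable def twoF1Coeff (a b c : ℝ) (n : ℕ) : ℝ :=
  poch a n * poch b n / (poch c n * poch 1 n)

lemma twoF1_one_eq_tsum (a b c : ℝ) : twoF1 a b c 1 = ∑' n, twoF1Coeff a b c n := by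
  simp only [twoF1, twoF1Coeff, poch_one, one_pow, mul_one, div_div]

lemma isBigO_twoF1Coeff_succ (a b c : ℝ) :
    (fun n => twoF1Coeff a b c (n + 1)) =O[atTop] fun n : ℕ => (n : ℝ) ^ (a + b - c - 1) := by
  have hbdd := ((((GammaSeq_tendsto_Gamma c).mul (GammaSeq_tendsto_Gamma 1)).mul
    (tendsto_GammaSeq_inv a)).mul (tendsto_GammaSeq_inv b)).isBigO_one ℝ
  refine ((isBigO_refl (fun n : ℕ => (n : ℝ) ^ (a + b - c - 1)) atTop).mul hbdd).congr' ?_ ?_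
  · filter_upwards [eventually_ne_atTop 0] with n hn
    exact (poch_mul_poch_div_eq_GammaSeq a b c 1 hn).symm
  · exact .of_forall fun n => mul_one _

lemma summable_twoF1Coeff {a b c : ℝ} (h : 0 < c - a - b) : Summable (twoF1Coeff a b c) := by
  rw [← summable_nat_add_iff 1]
  exact summable_of_isBigO_nat (summable_nat_rpow.2 (by linarith)) (isBigO_twoF1Coeff_succ a b c)

lemma tendsto_natCast_mul_twoF1Coeff {a b c : ℝ} (h : 0 < c - a - b) :
    Tendsto (fun n : ℕ => n * twoF1Coeff a b c n) atTop (𝓝 0) := by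
  rw [← tendsto_add_atTop_iff_nat 1]
  have hlin : (fun n : ℕ => ((n + 1 : ℕ) : ℝ)) =O[atTop] fun n : ℕ => (n : ℝ) :=
    .of_bound 2 <| by
      filter_upwards [eventually_ge_atTop 1] with n hn
      have : (1 : ℝ) ≤ n := by exact_mod_cast hn
      simp only [Real.norm_eq_abs, Nat.abs_cast]
      push_cast
      linarith
  refine (hlin.mul (isBigO_twoF1Coeff_succ a b c)).trans_tendsto ?_
  have hdecay := (tendsto_rpow_neg_atTop h).comp tendsto_natCast_atTop_atTop
  refine hdecay.congr' ?_
  filter_upwards [eventually_ne_atTop 0] with n hn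
  rw [Function.comp_apply, rpow_sub_one (by positivity), mul_div_cancel₀ _ (by positivity)]
  congr 1
  ring

lemma tsum_sub_succ_eq {G : Type*} [AddCommGroup G] [TopologicalSpace G] [IsTopologicalAddGroup G]
    [T2Space G] {u : ℕ → G} (hs : Summable fun n => u n - u (n + 1))
    (hu : Tendsto u atTop (𝓝 0)) : ∑' n, (u n - u (n + 1)) = u 0 := by
  refine tendsto_nhds_unique hs.hasSum.tendsto_sum_nat ?_
  simp only [Finset.sum_range_sub']
  simpa using hu.const_sub (u 0)

lemma twoF1Coeff_contiguous {a b c : ℝ} (hc : ∀ m : ℕ, c ≠ -m) (n : ℕ) :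
    c * (c - a - b) * twoF1Coeff a b c n - (c - a) * (c - b) * twoF1Coeff a b (c + 1) n =
      c * n * twoF1Coeff a b c n - c * (n + 1 : ℕ) * twoF1Coeff a b c (n + 1) := by
  have hc0 : c ≠ 0 := by simpa using hc 0
  have hcn : c + n ≠ 0 := fun h => hc n (eq_neg_of_add_eq_zero_left h)
  have hpc := poch_ne_zero hc n
  have hp1 := (poch_pos one_pos n).ne'
  have hshift : poch (c + 1) n = poch c n * (c + n) / c := by
    rw [eq_div_iff hc0, mul_comm, ← poch_succ', poch_succ]
  simp only [twoF1Coeff, poch_succ _ n, hshift]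
  push_cast
  field_simp
  ring

lemma twoF1_one_contiguous {a b c : ℝ} (hc : ∀ m : ℕ, c ≠ -m) (h : 0 < c - a - b) :
    c * (c - a - b) * twoF1 a b c 1 = (c - a) * (c - b) * twoF1 a b (c + 1) 1 := by
  have hs := summable_twoF1Coeff h
  have hs₁ := summable_twoF1Coeff (a := a) (b := b) (c := c + 1) (by linarith)
  have htel := tsum_sub_succ_eq (u := fun n : ℕ => c * n * twoF1Coeff a b c n)
    ((hs.mul_left _).sub (hs₁.mul_left _) |>.congr (twoF1Coeff_contiguous hc))
    (by simpa [mul_assoc] using (tendsto_natCast_mul_twoF1Coeff h).const_mul c)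
  rw [← tsum_congr (twoF1Coeff_contiguous hc), (hs.mul_left _).tsum_sub (hs₁.mul_left _),
    tsum_mul_left, tsum_mul_left] at htel
  rw [twoF1_one_eq_tsum, twoF1_one_eq_tsum]
  simpa [sub_eq_zero] using htel

lemma poch_mul_twoF1_one {a b c : ℝ} (hc : ∀ m : ℕ, c ≠ -m) (h : 0 < c - a - b) (m : ℕ) :
    poch c m * poch (c - a - b) m * twoF1 a b c 1 =
      poch (c - a) m * poch (c - b) m * twoF1 a b (c + m) 1 := by
  induction m with
  | zero => simp [poch_zero]
  | succ m ih =>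
    have hcm : ∀ k : ℕ, c + m ≠ -k := fun k hk => hc (m + k) (by push_cast; linarith)
    have hrec := twoF1_one_contiguous hcm (by linarith : 0 < c + m - a - b)
    rw [Nat.cast_succ, ← add_assoc, poch_succ, poch_succ, poch_succ, poch_succ]
    linear_combination (c + m) * (c - a - b + m) * ih + poch (c - a) m * poch (c - b) m * hrec

lemma abs_twoF1Coeff_succ_le {a b c c' : ℝ} (hc : 0 < c) (hcc' : c ≤ c') (n : ℕ) :
    |twoF1Coeff a b c' (n + 1)| ≤ c / c' * twoF1Coeff |a| |b| c (n + 1) := by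
  have hc' : 0 < c' := hc.trans_le hcc'
  have hp1 := poch_pos one_pos (n + 1)
  have hpc := poch_pos (by linarith : 0 < c + 1) n
  have hpc' := poch_pos (by linarith : 0 < c' + 1) n
  have hpa := poch_nonneg (abs_nonneg a) (n + 1)
  have hpb := poch_nonneg (abs_nonneg b) (n + 1)
  calc |twoF1Coeff a b c' (n + 1)|
      = |poch a (n + 1)| * |poch b (n + 1)| / (c' * poch (c' + 1) n * poch 1 (n + 1)) := by
        rw [twoF1Coeff, abs_div, abs_mul, poch_succ' c',
          abs_of_pos (a := c' * _ * _) (by positivity)]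
    _ ≤ poch |a| (n + 1) * poch |b| (n + 1) / (c' * poch (c + 1) n * poch 1 (n + 1)) := by
        refine div_le_div₀ (mul_nonneg hpa hpb)
          (mul_le_mul (abs_poch_le a _) (abs_poch_le b _) (abs_nonneg _) hpa) (by positivity) ?_
        gcongr
        exact poch_le_poch (by linarith) (by linarith) n
    _ = c / c' * twoF1Coeff |a| |b| c (n + 1) := by
        rw [twoF1Coeff, poch_succ' c]
        field_simp

lemma tendsto_twoF1_one_atTop (a b : ℝ) : Tendsto (fun c => twoF1 a b c 1) atTop (𝓝 1) := by
  set c₀ := |a| + |b| + 1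
  have hc₀ : 0 < c₀ := by positivity
  have hs₀ := (summable_nat_add_iff 1).2 <|
    summable_twoF1Coeff (a := |a|) (b := |b|) (c := c₀) (by linarith)
  suffices Tendsto (fun c => twoF1 a b c 1 - 1) atTop (𝓝 0) by simpa using this.add_const 1
  refine squeeze_zero_norm' ?_ (tendsto_const_nhds.div_atTop tendsto_id
    (a := c₀ * ∑' n, twoF1Coeff |a| |b| c₀ (n + 1)))
  filter_upwards [eventually_ge_atTop c₀] with c hc
  have hs := summable_twoF1Coeff (a := a) (b := b) (c := c)
    (by linarith [le_abs_self a, le_abs_self b])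
  calc ‖twoF1 a b c 1 - 1‖ = ‖∑' n, twoF1Coeff a b c (n + 1)‖ := by
        rw [twoF1_one_eq_tsum, hs.tsum_eq_zero_add]
        simp [twoF1Coeff, poch_zero]
    _ ≤ c₀ / c * ∑' n, twoF1Coeff |a| |b| c₀ (n + 1) :=
        tsum_of_norm_bounded (hs₀.hasSum.mul_left _) fun n => abs_twoF1Coeff_succ_le hc₀ hc n
    _ = (c₀ * ∑' n, twoF1Coeff |a| |b| c₀ (n + 1)) / id c := by
        rw [id, div_mul_eq_mul_div, mul_div_right_comm]

theorem gauss_summation (a b c : ℝ) (hc : ∀ n : ℕ, c ≠ -(n : ℝ)) (h : 0 < c - a - b) :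
    twoF1 a b c 1 = Real.Gamma c * Real.Gamma (c - a - b) /
      (Real.Gamma (c - a) * Real.Gamma (c - b)) := by
  have hratio := tendsto_poch_mul_poch_div (x := c - a) (y := c - b) (z := c) (w := c - a - b)
    (by ring)
  have htail := (tendsto_twoF1_one_atTop a b).comp
    (tendsto_atTop_add_const_left _ c tendsto_natCast_atTop_atTop)
  have hshift (m : ℕ) : twoF1 a b c 1 =
      poch (c - a) m * poch (c - b) m / (poch c m * poch (c - a - b) m) *
        twoF1 a b (c + m) 1 := by
    have hden : poch c m * poch (c - a - b) m ≠ 0 :=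
      mul_ne_zero (poch_ne_zero hc m) (poch_pos h m).ne'
    rw [div_mul_eq_mul_div, eq_div_iff hden, mul_comm, poch_mul_twoF1_one hc h]
  simpa using tendsto_nhds_unique (tendsto_const_nhds.congr hshift) (hratio.mul htail)
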